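/- Let ε > 0, d ≥ 2, λ_1,…,λ_d > 0 and define the regularized matrix A_ε(ρ) = (1/2)(I_d + M_ε(ρ)) for ρ ∈ (ℝ_+)^d, where M_ε is M with denominator (Σ_l λ_l ρ_l)^2 replaced by ε^2 ∨ (Σ_l λ_l ρ_l)^2. Then for each i ∈ {1,…,d} and each ρ ∈ (ℝ_+)^d with ρ_i = 0, the diagonal entry satisfies A_{ε,ii}(ρ) ≥ λ_min/(2 λ_max) > 0. -/

import Mathlib

open Matrix Finset

/-- The regularized matrix `M_ε(ρ)`, with denominator `ε² ∨ (Σ_l λ_l ρ_l)²`. -/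
noncomputable def Meps {d : ℕ} (lam : Fin d → ℝ) (ε : ℝ) (ρ : Fin d → ℝ) :
    Matrix (Fin d) (Fin d) ℝ :=
  Matrix.of fun i j =>
    if i = j then
      ((∑ l ∈ Finset.univ.erase i, lam l * ρ l) *
        (∑ l ∈ Finset.univ.erase i, (lam i - lam l) * ρ l)) /
        max (ε ^ 2) ((∑ l, lam l * ρ l) ^ 2)
    else
      (lam i * ρ i * (∑ l ∈ Finset.univ.erase j, (lam l - lam j) * ρ l)) /
        max (ε ^ 2) ((∑ l, lam l * ρ l) ^ 2)

/-- The regularized matrix `A_ε(ρ) = (1/2)(I + M_ε(ρ))`. -/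
noncomputable def Aeps {d : ℕ} (lam : Fin d → ℝ) (ε : ℝ) (ρ : Fin d → ℝ) :
    Matrix (Fin d) (Fin d) ℝ :=
  (1 / 2 : ℝ) • ((1 : Matrix (Fin d) (Fin d) ℝ) + Meps lam ε ρ)

theorem stmt17 {d : ℕ} (hd : 2 ≤ d) (ε : ℝ) (hε : 0 < ε)
    (lam : Fin d → ℝ) (hlam : ∀ i, 0 < lam i)
    (lmin lmax : ℝ) (hmin : IsLeast (Set.range lam) lmin)
    (hmax : IsGreatest (Set.range lam) lmax)
    (ρ : Fin d → ℝ) (hρ : ∀ i, 0 ≤ ρ i) (i : Fin d) (hi : ρ i = 0) :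
    lmin / (2 * lmax) ≤ Aeps lam ε ρ i i ∧ 0 < lmin / (2 * lmax) := by
  obtain ⟨j, hj⟩ := hmin.1
  obtain ⟨k, hk⟩ := hmax.1
  have hlmin : 0 < lmin := hj ▸ hlam j
  have hlmax : 0 < lmax := hk ▸ hlam k
  have hle : lmin ≤ lmax := le_trans (hmin.2 ⟨k, hk⟩) le_rfl
  refine ⟨?_, by positivity⟩
  set S := ∑ l ∈ Finset.univ.erase i, lam l * ρ l with hS
  set P := ∑ l ∈ Finset.univ.erase i, ρ l with hP
  have hT : (∑ l ∈ Finset.univ.erase i, (lam i - lam l) * ρ l) = lam i * P - S := by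
    rw [hP, hS, Finset.mul_sum, ← Finset.sum_sub_distrib]
    exact Finset.sum_congr rfl fun l _ => by ring
  have hsum : (∑ l, lam l * ρ l) = S := by
    rw [hS, ← Finset.add_sum_erase _ _ (Finset.mem_univ i), hi]; ring
  set D := max (ε ^ 2) (S ^ 2) with hDdef
  have hD : 0 < D := lt_max_of_lt_left (by positivity)
  have hS0 : 0 ≤ S := Finset.sum_nonneg fun l _ => mul_nonneg (hlam l).le (hρ l)
  have hP0 : 0 ≤ P := Finset.sum_nonneg fun l _ => hρ l
  have hSP : S ≤ lmax * P := by
    rw [hP, hS, Finset.mul_sum]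
    exact Finset.sum_le_sum fun l _ =>
      mul_le_mul_of_nonneg_right (hmax.2 ⟨l, rfl⟩) (hρ l)
  have hS2D : S ^ 2 ≤ D := le_max_right _ _
  have h1 : lmin / lmax - 1 ≤ 0 := by
    have : lmin / lmax ≤ 1 := (div_le_one hlmax).2 hle
    linarith
  have h2 : (lmin / lmax) * S ^ 2 ≤ lam i * P * S := by
    have hSS : S ^ 2 ≤ lmax * P * S := by
      have := mul_le_mul_of_nonneg_right hSP hS0
      nlinarith
    calc (lmin / lmax) * S ^ 2 ≤ (lmin / lmax) * (lmax * P * S) :=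
          mul_le_mul_of_nonneg_left hSS (by positivity)
      _ = lmin * (P * S) := by field_simp
      _ ≤ lam i * (P * S) :=
          mul_le_mul_of_nonneg_right (hmin.2 ⟨i, rfl⟩) (mul_nonneg hP0 hS0)
      _ = lam i * P * S := by ring
  have key : (lmin / lmax - 1) * D ≤ S * (lam i * P - S) := by
    have h3 : (lmin / lmax - 1) * D ≤ (lmin / lmax - 1) * S ^ 2 :=
      mul_le_mul_of_nonpos_left hS2D h1
    nlinarith
  have hM : lmin / lmax - 1 ≤ Meps lam ε ρ i i := by
    simp only [Meps, Matrix.of_apply, eq_self_iff_true, if_true, hT, hsum, ← hS]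
    rw [le_div_iff₀ hD]
    exact key
  have hA : Aeps lam ε ρ i i = 1 / 2 * (1 + Meps lam ε ρ i i) := by
    simp [Aeps, Matrix.add_apply, Matrix.one_apply_eq, Matrix.smul_apply]
  rw [hA]
  have heq : lmin / (2 * lmax) = 1 / 2 * (1 + (lmin / lmax - 1)) := by
    field_simp
    ring
  linarith
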